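/- arXiv:2510.10317 — 8 statements merged into one kernel-verified Lean document; each statement's English description precedes it below -/
import Mathlib

section
/- Let n ∈ ℕ and let x, y : Fin n → ℝ be two n-tuples of real numbers. There exists an order-preserving bijection g : ℝ → ℝ with g (x i) = y i for all i if and only if x and y have the same order pattern, i.e., for all i, j : Fin n one has x i < x j ↔ y i < y j. -/
/-! An increasing map on a finite set extends to an order automorphism, adding the points of the
set in increasing order: if `g` already agrees with `f` below the new maximum `a`, compose `g` with
an automorphism that fixes everything up to the previous values and stretches the half-line above
them affinely, sending `g a` to `f a`. A tuple `y` with the order pattern of `x` defines such a map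
`x i ↦ y i` on the range of `x`. -/

open Set Finset Function

section

variable {K : Type*} [Field K] [LinearOrder K] [IsStrictOrderedRing K]

theorem exists_orderIso_eqOn_Iic_apply_eq {c p q : K} (hp : c < p) (hq : c < q) :
    ∃ h : K ≃o K, EqOn h id (Iic c) ∧ h p = q := by
  set r := (q - c) / (p - c)
  have hr : 0 < r := div_pos (sub_pos.2 hq) (sub_pos.2 hp)
  let f : K → K := fun t => if t ≤ c then t else c + (t - c) * r
  have hmono : StrictMono f := by
    intro a b hab
    simp only [f]
    split_ifs with ha hb hb
    · exact hab
    · nlinarith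
    · linarith
    · nlinarith
  have hsurj : Surjective f := by
    intro u
    by_cases hu : u ≤ c
    · exact ⟨u, if_pos hu⟩
    · refine ⟨c + (u - c) / r, ?_⟩
      have hpos : 0 < (u - c) / r := div_pos (by linarith) hr
      simp only [f, if_neg (by linarith : ¬c + (u - c) / r ≤ c)]
      field_simp
      ring
  refine ⟨hmono.orderIsoOfSurjective f hsurj, fun t ht => if_pos ht, ?_⟩
  change f p = q
  simp only [f, if_neg (not_le.2 hp), r]
  field_simp
  ring

theorem exists_orderIso_fix_apply_eq_of_forall_lt {t : Finset K} {p q : K}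
    (hp : ∀ u ∈ t, u < p) (hq : ∀ u ∈ t, u < q) :
    ∃ h : K ≃o K, (∀ u ∈ t, h u = u) ∧ h p = q := by
  set c := (insert (min p q - 1) t).max' (insert_nonempty _ _)
  have hc : c < min p q := by
    refine (max'_lt_iff _ _).2 (forall_mem_insert _ _ _ |>.2 ⟨by linarith, ?_⟩)
    exact fun u hu => lt_min (hp u hu) (hq u hu)
  obtain ⟨h, hfix, hpq⟩ :=
    exists_orderIso_eqOn_Iic_apply_eq (hc.trans_le (min_le_left p q)) (hc.trans_le (min_le_right p q))
  exact ⟨h, fun u hu => hfix (le_max' _ _ (mem_insert_of_mem hu)), hpq⟩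

theorem exists_orderIso_eqOn_of_strictMonoOn (s : Finset K) {f : K → K}
    (hf : StrictMonoOn f s) : ∃ g : K ≃o K, EqOn g f s := by
  induction s using Finset.induction_on_max with
  | empty => exact ⟨OrderIso.refl K, by simp⟩
  | insert a s ha ih =>
    have hsa : (s : Set K) ⊆ ↑(insert a s) := by simp
    obtain ⟨g, hg⟩ := ih (hf.mono hsa)
    have hlt_g : ∀ u ∈ s.image f, u < g a :=
      Finset.forall_mem_image.2 fun b hb => hg hb ▸ g.strictMono (ha b hb)
    have hlt_f : ∀ u ∈ s.image f, u < f a :=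
      Finset.forall_mem_image.2 fun b hb => hf (hsa hb) (by simp) (ha b hb)
    obtain ⟨h, hfix, hga⟩ := exists_orderIso_fix_apply_eq_of_forall_lt hlt_g hlt_f
    refine ⟨g.trans h, ?_⟩
    intro b hb
    rcases Finset.mem_insert.1 hb with rfl | hb
    · exact hga
    · simp only [OrderIso.trans_apply, hg hb]
      exact hfix _ (mem_image_of_mem f hb)

theorem exists_orderIso_apply_eq_of_lt_iff_lt {ι : Type*} [Finite ι] {x y : ι → K}
    (h : ∀ i j, x i < x j ↔ y i < y j) : ∃ g : K ≃o K, ∀ i, g (x i) = y i := by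
  have hxy : y.FactorsThrough x := fun i j hij =>
    le_antisymm (by simpa [hij] using h j i) (by simpa [hij] using h i j)
  have hmono : StrictMonoOn (extend x y 0) ↑(finite_range x).toFinset := by
    rw [Finite.coe_toFinset]
    rintro _ ⟨i, rfl⟩ _ ⟨j, rfl⟩ hlt
    rw [hxy.extend_apply, hxy.extend_apply]
    exact (h i j).1 hlt
  obtain ⟨g, hg⟩ := exists_orderIso_eqOn_of_strictMonoOn _ hmono
  exact ⟨g, fun i => (hg (by simp)).trans (hxy.extend_apply 0 i)⟩

end

/-- Two `n`-tuples of reals lie in the same orbit of `Aut(ℝ, <)` (acting coordinatewise)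
if and only if they have the same order pattern. -/
theorem stmt_0 (n : ℕ) (x y : Fin n → ℝ) :
    (∃ g : ℝ ≃o ℝ, ∀ i, g (x i) = y i) ↔ (∀ i j, x i < x j ↔ y i < y j) := by
  constructor
  · rintro ⟨g, hg⟩ i j
    rw [← hg i, ← hg j, g.lt_iff_lt]
  · exact exists_orderIso_apply_eq_of_lt_iff_lt
end

section
/- Let z : Fin N → ℝ be any tuple and let k be the cardinality of the range of z. Then there is a bijection from the orbit {g ∘ z | g an order-preserving bijection of ℝ} (a subset of Fin N → ℝ) to ℝ^{(k)} which is equivariant for the coordinatewise actions of the group of order-preserving bijections of ℝ on both sides. -/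
/-- The orbit of a tuple `z : Fin N → ℝ` under the coordinatewise action of the
order-automorphism group of `ℝ`. -/
def realOrbit (N : ℕ) (z : Fin N → ℝ) : Set (Fin N → ℝ) :=
  {w | ∃ g : ℝ ≃o ℝ, w = fun i => g (z i)}

/-- The coordinatewise action of an order automorphism of `ℝ` on the orbit of `z`. -/
def realOrbit.act (N : ℕ) (z : Fin N → ℝ) (g : ℝ ≃o ℝ) (w : realOrbit N z) :
    realOrbit N z :=
  ⟨fun i => g (w.1 i), by
    obtain ⟨g₀, h⟩ := w.2
    exact ⟨g₀.trans g, by funext i; simp [h]⟩⟩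

/-- The coordinatewise action of an order automorphism of `ℝ` on strictly increasing
`k`-tuples. -/
def incAct (k : ℕ) (g : ℝ ≃o ℝ) (x : {x : Fin k → ℝ // StrictMono x}) :
    {x : Fin k → ℝ // StrictMono x} :=
  ⟨fun i => g (x.1 i), g.strictMono.comp x.2⟩

/-!
Enumerate the values of `z` increasingly as `s : Fin k → ℝ`, with `z = s ∘ p` and `s = z ∘ σ`.
A tuple `g ∘ z = g ∘ s ∘ p` in the orbit of `z` is determined by `g ∘ s`, its restriction to the
positions `σ`, and restriction is visibly equivariant. It is onto because `Aut(ℝ, <)` acts transitively on strictly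
increasing `k`-tuples: fix everything below a point and rescale linearly above it, one
coordinate at a time.
-/

noncomputable def scaleAbove (c r : ℝ) (hr : 0 < r) : ℝ ≃o ℝ where
  toFun t := if t ≤ c then t else c + r * (t - c)
  invFun t := if t ≤ c then t else c + r⁻¹ * (t - c)
  left_inv t := by
    by_cases ht : t ≤ c
    · simp [ht]
    · have : ¬ c + r * (t - c) ≤ c := not_le.mpr (by nlinarith [not_le.mp ht])
      simp [ht, this, hr.ne']
  right_inv t := by
    by_cases ht : t ≤ c
    · simp [ht]
    · have : ¬ c + r⁻¹ * (t - c) ≤ c := not_le.mpr (by nlinarith [not_le.mp ht, inv_pos.mpr hr])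
      simp [ht, this, hr.ne']
  map_rel_iff' {t u} := by
    by_cases ht : t ≤ c <;> by_cases hu : u ≤ c <;>
      simp only [Equiv.coe_fn_mk, ht, hu, if_true, if_false] <;>
      constructor <;> intro h <;> nlinarith

lemma scaleAbove_of_le {c r : ℝ} (hr : 0 < r) {t : ℝ} (ht : t ≤ c) : scaleAbove c r hr t = t :=
  if_pos ht

lemma scaleAbove_of_lt {c r : ℝ} (hr : 0 < r) {t : ℝ} (ht : c < t) :
    scaleAbove c r hr t = c + r * (t - c) :=
  if_neg (not_le.mpr ht)

lemma exists_orderIso_fix_Iic_apply_eq {c d e : ℝ} (hd : c < d) (he : c < e) :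
    ∃ g : ℝ ≃o ℝ, (∀ t ≤ c, g t = t) ∧ g d = e := by
  have hr : 0 < (e - c) / (d - c) := div_pos (by linarith) (by linarith)
  refine ⟨scaleAbove c _ hr, fun t ht => scaleAbove_of_le hr ht, ?_⟩
  rw [scaleAbove_of_lt hr hd, div_mul_cancel₀ _ (sub_pos.mpr hd).ne']
  ring

lemma exists_orderIso_fix_Iic_comp_eq {k : ℕ} {c : ℝ} {a b : Fin k → ℝ}
    (ha : StrictMono a) (hb : StrictMono b) (hca : ∀ i, c < a i) (hcb : ∀ i, c < b i) :
    ∃ g : ℝ ≃o ℝ, (∀ t ≤ c, g t = t) ∧ g ∘ a = b := by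
  induction k generalizing c with
  | zero => exact ⟨OrderIso.refl ℝ, fun _ _ => rfl, funext fun i => i.elim0⟩
  | succ k ih =>
    obtain ⟨g₁, hg₁c, hg₁a⟩ := exists_orderIso_fix_Iic_apply_eq (hca 0) (hcb 0)
    obtain ⟨g₂, hg₂c, hg₂a⟩ := ih (c := b 0) (a := g₁ ∘ Fin.tail a) (b := Fin.tail b)
      (g₁.strictMono.comp (ha.comp (Fin.strictMono_succ)))
      (hb.comp Fin.strictMono_succ)
      (fun i => hg₁a ▸ g₁.strictMono (ha (Fin.succ_pos i)))
      (fun i => hb (Fin.succ_pos i))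
    refine ⟨g₁.trans g₂, fun t ht => ?_, funext fun i => ?_⟩
    · simp [hg₁c t ht, hg₂c t (ht.trans (hcb 0).le)]
    · refine Fin.cases ?_ (fun i => ?_) i
      · simp [hg₁a, hg₂c]
      · exact congrFun hg₂a i

lemma exists_orderIso_comp_eq {k : ℕ} {a b : Fin k → ℝ} (ha : StrictMono a)
    (hb : StrictMono b) : ∃ g : ℝ ≃o ℝ, g ∘ a = b := by
  obtain ⟨c, hc⟩ := ((Set.finite_range a).union (Set.finite_range b)).bddBelow
  obtain ⟨g, -, hg⟩ := exists_orderIso_fix_Iic_comp_eq (c := c - 1) ha hb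
    (fun i => by linarith [hc (Or.inl ⟨i, rfl⟩)]) (fun i => by linarith [hc (Or.inr ⟨i, rfl⟩)])
  exact ⟨g, hg⟩

lemma Set.Finite.exists_strictMono_range_eq {α : Type*} [LinearOrder α] {S : Set α}
    (hS : S.Finite) : ∃ s : Fin S.ncard → α, StrictMono s ∧ Set.range s = S :=
  ⟨hS.toFinset.orderEmbOfFin (Set.ncard_eq_toFinset_card S hS).symm,
    OrderEmbedding.strictMono _, by simp⟩

section OrbitEquiv

variable {N k : ℕ} {z : Fin N → ℝ} {s : Fin k → ℝ} {σ : Fin k → Fin N} {p : Fin N → Fin k}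

lemma strictMono_comp_of_mem_realOrbit (hs : StrictMono s) (hσ : ∀ j, z (σ j) = s j)
    {w : Fin N → ℝ} (hw : w ∈ realOrbit N z) : StrictMono (w ∘ σ) := by
  obtain ⟨g, rfl⟩ := hw
  change StrictMono fun j => g (z (σ j))
  simp only [hσ]
  exact g.strictMono.comp hs

lemma comp_mem_realOrbit (hs : StrictMono s) (hp : ∀ i, s (p i) = z i) {x : Fin k → ℝ}
    (hx : StrictMono x) : x ∘ p ∈ realOrbit N z := by
  obtain ⟨g, hg⟩ := exists_orderIso_comp_eq hs hx
  exact ⟨g, funext fun i => by rw [← hp, ← hg]; rfl⟩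

noncomputable def realOrbitEquivStrictMono (hs : StrictMono s) (hσ : ∀ j, z (σ j) = s j)
    (hp : ∀ i, s (p i) = z i) : realOrbit N z ≃ {x : Fin k → ℝ // StrictMono x} where
  toFun w := ⟨w.1 ∘ σ, strictMono_comp_of_mem_realOrbit hs hσ w.2⟩
  invFun x := ⟨x.1 ∘ p, comp_mem_realOrbit hs hp x.2⟩
  left_inv w := by
    obtain ⟨g, hg⟩ := w.2
    ext i
    simp only [Function.comp_apply, hg, hσ, hp]
  right_inv x := by
    ext j
    have : p (σ j) = j := hs.injective <| by rw [hp, hσ]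
    simp [this]

end OrbitEquiv

/-- If `k` is the number of distinct values of the tuple `z : Fin N → ℝ`, then the orbit
of `z` under the coordinatewise action of `Aut(ℝ, <)` is in equivariant bijection with the
set `ℝ^{(k)}` of strictly increasing `k`-tuples. -/
theorem stmt_2 (N : ℕ) (z : Fin N → ℝ) (k : ℕ) (hk : k = (Set.range z).ncard) :
    ∃ e : realOrbit N z ≃ {x : Fin k → ℝ // StrictMono x},
      ∀ (g : ℝ ≃o ℝ) (w : realOrbit N z),
        e (realOrbit.act N z g w) = incAct k g (e w) := by
  subst hk
  obtain ⟨s, hs, hrange⟩ := (Set.finite_range z).exists_strictMono_range_eq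
  choose σ hσ using fun j => hrange.subset (Set.mem_range_self j)
  choose p hp using fun i => hrange.symm.subset (Set.mem_range_self i)
  exact ⟨realOrbitEquivStrictMono hs hσ hp, fun _ _ => rfl⟩
end

section
/- Fix n ∈ ℕ and let H be the set of order-preserving bijections g : ℝ → ℝ such that g(i) = i for every integer i with 1 ≤ i ≤ n (the stabilizer of the point (1, 2, …, n) of ℝ^{(n)}). Then a strictly increasing m-tuple y ∈ ℝ^{(m)} satisfies g(y i) = y i for all g ∈ H and all i : Fin m if and only if every coordinate y i is an integer belonging to {1, …, n}. In particular any such y exists only when m ≤ n. -/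
/-!
A point `x` outside a closed set `S ⊆ ℝ` lies in an open interval `(a, b)` missing `S`. The
quadratic bump `t ↦ a + (t - a)² / (b - a)` on `(a, b)`, extended by the identity, is an order
automorphism of `ℝ` that fixes `S` pointwise and moves `x`. So the points fixed by the pointwise
stabilizer of `S` are exactly those of `S`; for `S = {1, …, n}` the coordinates of `y` are then
distinct elements of `{1, …, n}`, whence `m ≤ n`.
-/

open Set

noncomputable def bumpFun (a b : ℝ) (t : ℝ) : ℝ :=
  if t ∈ Ioo a b then a + (t - a) ^ 2 / (b - a) else t

variable {a b t : ℝ}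

lemma bumpFun_of_mem (ht : t ∈ Ioo a b) : bumpFun a b t = a + (t - a) ^ 2 / (b - a) := if_pos ht

lemma bumpFun_of_notMem (ht : t ∉ Ioo a b) : bumpFun a b t = t := if_neg ht

lemma bumpFun_lt_self (ht : t ∈ Ioo a b) : bumpFun a b t < t := by
  have hta : 0 < t - a := sub_pos.2 ht.1
  have hba : 0 < b - a := by linarith [ht.2]
  have : (t - a) ^ 2 / (b - a) < t - a := by
    rw [div_lt_iff₀ hba]; nlinarith [ht.2]
  rw [bumpFun_of_mem ht]; linarith

lemma bumpFun_mem_Ioo (ht : t ∈ Ioo a b) : bumpFun a b t ∈ Ioo a b := by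
  refine ⟨?_, (bumpFun_lt_self ht).trans ht.2⟩
  rw [bumpFun_of_mem ht]
  have : 0 < (t - a) ^ 2 / (b - a) := div_pos (by nlinarith [ht.1]) (by linarith [ht.1, ht.2])
  linarith

lemma bumpFun_strictMono : StrictMono (bumpFun a b) := by
  intro s t hst
  by_cases hs : s ∈ Ioo a b <;> by_cases ht : t ∈ Ioo a b
  · rw [bumpFun_of_mem hs, bumpFun_of_mem ht]
    have hsa : a < s := hs.1
    gcongr
    linarith [ht.2]
  · have hbt : b ≤ t := by
      simp only [mem_Ioo, not_and_or, not_lt] at ht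
      exact ht.resolve_left (by linarith [hs.1])
    rw [bumpFun_of_notMem ht]
    linarith [(bumpFun_mem_Ioo hs).2]
  · have hsa : s ≤ a := by
      simp only [mem_Ioo, not_and_or, not_lt] at hs
      exact hs.resolve_right (by linarith [ht.2])
    rw [bumpFun_of_notMem hs]
    linarith [(bumpFun_mem_Ioo ht).1]
  · rwa [bumpFun_of_notMem hs, bumpFun_of_notMem ht]

lemma bumpFun_surjective : Function.Surjective (bumpFun a b) := by
  intro z
  by_cases hz : z ∈ Ioo a b
  · have hba : 0 < b - a := by linarith [hz.1, hz.2]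
    set r := Real.sqrt ((z - a) * (b - a))
    have hr2 : r ^ 2 = (z - a) * (b - a) := Real.sq_sqrt (by nlinarith [hz.1])
    have hr0 : 0 < r := Real.sqrt_pos.2 (by nlinarith [hz.1])
    have hrb : r < b - a := by nlinarith [hz.2]
    refine ⟨a + r, ?_⟩
    rw [bumpFun_of_mem ⟨by linarith, by linarith⟩, add_sub_cancel_left, hr2,
      mul_div_cancel_right₀ _ hba.ne']
    ring
  · exact ⟨z, bumpFun_of_notMem hz⟩

variable (a b) in
noncomputable def bumpIso : ℝ ≃o ℝ :=
  bumpFun_strictMono.orderIsoOfSurjective (bumpFun a b) bumpFun_surjective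

lemma bumpIso_apply_of_notMem (ht : t ∉ Ioo a b) : bumpIso a b t = t := bumpFun_of_notMem ht

lemma bumpIso_apply_ne (ht : t ∈ Ioo a b) : bumpIso a b t ≠ t := (bumpFun_lt_self ht).ne

lemma exists_Ioo_disjoint_of_notMem {S : Set ℝ} (hS : IsClosed S) {x : ℝ} (hx : x ∉ S) :
    ∃ a b, x ∈ Ioo a b ∧ Disjoint (Ioo a b) S := by
  obtain ⟨ε, hε, hball⟩ := Metric.isOpen_iff.1 hS.isOpen_compl x hx
  refine ⟨x - ε, x + ε, ⟨by linarith, by linarith⟩, ?_⟩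
  rw [← Real.ball_eq_Ioo]
  exact subset_compl_iff_disjoint_right.1 hball

theorem IsClosed.forall_orderIso_fixing_apply_eq_iff {S : Set ℝ} (hS : IsClosed S) (x : ℝ) :
    (∀ g : ℝ ≃o ℝ, (∀ s ∈ S, g s = s) → g x = x) ↔ x ∈ S := by
  refine ⟨fun hfix => ?_, fun hx g hg => hg x hx⟩
  by_contra hx
  obtain ⟨a, b, hxab, hdisj⟩ := exists_Ioo_disjoint_of_notMem hS hx
  exact bumpIso_apply_ne hxab
    (hfix _ fun s hs => bumpIso_apply_of_notMem fun hs' => hdisj.notMem_of_mem_right hs hs')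

lemma le_of_injective_of_forall_eq_natCast {m n : ℕ} {y : Fin m → ℝ} (hy : Function.Injective y)
    (h : ∀ i, ∃ j : ℕ, 1 ≤ j ∧ j ≤ n ∧ y i = j) : m ≤ n := by
  choose j hj1 hjn hyj using h
  have hj : Function.Injective j := fun i i' hii' => hy <| by rw [hyj, hyj, hii']
  simpa using Finset.card_le_card_of_injOn j (s := Finset.univ) (t := Finset.Icc 1 n)
    (fun i _ => Finset.mem_Icc.2 ⟨hj1 i, hjn i⟩) hj.injOn

/-- Let `H ≤ Aut(ℝ, <)` be the stabilizer of the point `(1, 2, …, n)` of `ℝ^{(n)}`, i.e. the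
set of order-preserving bijections of `ℝ` fixing each integer `1 ≤ i ≤ n`.  A strictly
increasing tuple `y ∈ ℝ^{(m)}` is fixed coordinatewise by every element of `H` iff each
coordinate of `y` is an integer in `{1, …, n}`; in particular such a `y` forces `m ≤ n`. -/
theorem stmt_4 (n m : ℕ) (y : Fin m → ℝ) (hy : StrictMono y) :
    ((∀ g : ℝ ≃o ℝ, (∀ i : ℕ, 1 ≤ i → i ≤ n → g (i : ℝ) = (i : ℝ)) →
        ∀ i : Fin m, g (y i) = y i) ↔
      (∀ i : Fin m, ∃ j : ℕ, 1 ≤ j ∧ j ≤ n ∧ y i = (j : ℝ))) ∧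
    ((∀ g : ℝ ≃o ℝ, (∀ i : ℕ, 1 ≤ i → i ≤ n → g (i : ℝ) = (i : ℝ)) →
        ∀ i : Fin m, g (y i) = y i) → m ≤ n) := by
  set S : Set ℝ := {x | ∃ j : ℕ, 1 ≤ j ∧ j ≤ n ∧ x = j}
  have hS : IsClosed S := by
    refine ((finite_Icc 1 n).image ((↑) : ℕ → ℝ)).subset ?_ |>.isClosed
    rintro _ ⟨j, hj1, hjn, rfl⟩
    exact ⟨j, ⟨hj1, hjn⟩, rfl⟩
  have hstab (g : ℝ ≃o ℝ) : (∀ i : ℕ, 1 ≤ i → i ≤ n → g i = i) ↔ ∀ s ∈ S, g s = s :=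
    ⟨fun hg => by rintro _ ⟨j, hj1, hjn, rfl⟩; exact hg j hj1 hjn,
      fun hg j hj1 hjn => hg j ⟨j, hj1, hjn, rfl⟩⟩
  have hfixed : (∀ g : ℝ ≃o ℝ, (∀ i : ℕ, 1 ≤ i → i ≤ n → g i = i) → ∀ i, g (y i) = y i) ↔
      ∀ i, ∃ j : ℕ, 1 ≤ j ∧ j ≤ n ∧ y i = j := by
    simp only [hstab]
    exact ⟨fun h i => (hS.forall_orderIso_fixing_apply_eq_iff (y i)).1 fun g hg => h g hg i,
      fun h g hg i => hg _ (h i)⟩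
  exact ⟨hfixed, fun h => le_of_injective_of_forall_eq_natCast hy.injective (hfixed.1 h)⟩
end

section
/- For n ∈ ℕ let ℕ^{[n]} denote the set of injective functions Fin n → ℕ. Let f : ℕ^{[n]} → ℕ^{[m]} be a function such that f(σ ∘ x) = σ ∘ f(x) for every permutation σ of ℕ and every x ∈ ℕ^{[n]}. Then there exists a unique injective map j : Fin m → Fin n such that f(x) = x ∘ j for all x ∈ ℕ^{[n]}; in particular m ≤ n, and every equivariant map ℕ^{[n]} → ℕ^{[m]} is a projection onto a subset of the coordinates. -/
/-!
For an infinite type `α` and a finite `ι`, permutations of `α` act transitively on injective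
tuples `ι → α`, so an equivariant `f` is determined by its value at one injective tuple `x₀`.
Every entry of `f x₀` is an entry of `x₀`: otherwise a transposition of that entry with a point
outside the range of `x₀` would fix `x₀` but move `f x₀`. Reading off the positions gives `j`,
injective because `f x₀` is, and unique because `x₀` is.
-/

open Function

section EquivariantTuples

variable {α ι κ : Type*} [Infinite α] [Finite ι]

theorem exists_injective_of_finite_of_infinite : ∃ x : ι → α, Injective x :=
  ⟨_, (Infinite.natEmbedding α).injective.comp
    (Fin.val_injective.comp (Finite.equivFin ι).injective)⟩

theorem Equiv.Perm.exists_comp_eq_of_injective {x y : ι → α} (hx : Injective x)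
    (hy : Injective y) : ∃ σ : Equiv.Perm α, σ ∘ x = y := by
  let e : Set.range x ↪ α := ((Equiv.ofInjective x hx).symm.toEmbedding).trans ⟨y, hy⟩
  have hsmall : Cardinal.mk (Set.range x) < Cardinal.mk α :=
    (Set.finite_range x).lt_aleph0.trans_le (Cardinal.aleph0_le_mk α)
  obtain ⟨σ, hσ⟩ := Cardinal.extend_function_of_lt e hsmall ⟨Equiv.refl α⟩
  refine ⟨σ, funext fun i => ?_⟩
  simpa [e] using hσ ⟨x i, i, rfl⟩

variable {f : {x : ι → α // Injective x} → {y : κ → α // Injective y}}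
  (hf : ∀ (σ : Equiv.Perm α) (x : {x : ι → α // Injective x}),
    (f ⟨σ ∘ x.1, σ.injective.comp x.2⟩).1 = σ ∘ (f x).1)
include hf

theorem apply_mem_range_of_equivariant (x : {x : ι → α // Injective x}) (k : κ) :
    (f x).1 k ∈ Set.range x.1 := by
  classical
  by_contra ha
  set a := (f x).1 k
  obtain ⟨b, hb⟩ := ((Set.finite_range x.1).insert a).infinite_compl.nonempty
  rw [Set.mem_compl_iff, Set.mem_insert_iff, not_or] at hb
  have hfix : (⟨Equiv.swap a b ∘ x.1, (Equiv.swap a b).injective.comp x.2⟩ :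
      {x : ι → α // Injective x}) = x :=
    Subtype.ext <| funext fun i =>
      Equiv.swap_apply_of_ne_of_ne (fun h => ha ⟨i, h⟩) (fun h => hb.2 ⟨i, h⟩)
  have hk := congrFun (hf (Equiv.swap a b) x) k
  rw [hfix, comp_apply, Equiv.swap_apply_left] at hk
  exact hb.1 hk.symm

theorem exists_eq_comp_of_equivariant :
    ∃ j : κ → ι, ∀ x : {x : ι → α // Injective x}, (f x).1 = x.1 ∘ j := by
  obtain ⟨x₀, hx₀⟩ := exists_injective_of_finite_of_infinite (ι := ι) (α := α)
  choose j hj using apply_mem_range_of_equivariant hf ⟨x₀, hx₀⟩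
  refine ⟨j, fun x => ?_⟩
  obtain ⟨σ, hσ⟩ := Equiv.Perm.exists_comp_eq_of_injective hx₀ x.2
  have hx : (⟨σ ∘ x₀, σ.injective.comp hx₀⟩ : {x : ι → α // Injective x}) = x := Subtype.ext hσ
  calc (f x).1 = σ ∘ (f ⟨x₀, hx₀⟩).1 := hx ▸ hf σ ⟨x₀, hx₀⟩
    _ = σ ∘ x₀ ∘ j := by rw [← funext hj]; rfl
    _ = x.1 ∘ j := by rw [← hσ]; rfl

theorem existsUnique_injective_eq_comp_of_equivariant :
    ∃! j : κ → ι, Injective j ∧ ∀ x : {x : ι → α // Injective x}, (f x).1 = x.1 ∘ j := by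
  obtain ⟨j, hj⟩ := exists_eq_comp_of_equivariant hf
  obtain ⟨x₀, hx₀⟩ := exists_injective_of_finite_of_infinite (ι := ι) (α := α)
  refine ⟨j, ⟨?_, hj⟩, fun j' ⟨_, hj'⟩ => ?_⟩
  · exact Injective.of_comp (hj ⟨x₀, hx₀⟩ ▸ (f ⟨x₀, hx₀⟩).2)
  · exact hx₀.comp_left ((hj' ⟨x₀, hx₀⟩).symm.trans (hj ⟨x₀, hx₀⟩))

end EquivariantTuples

/-- Every map `ℕ^{[n]} → ℕ^{[m]}` between sets of injective tuples that is equivariant for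
the coordinatewise action of the infinite symmetric group is the projection onto a unique
subset of the coordinates; in particular `m ≤ n`. -/
theorem stmt_7 (n m : ℕ)
    (f : {x : Fin n → ℕ // Function.Injective x} → {y : Fin m → ℕ // Function.Injective y})
    (hf : ∀ (σ : Equiv.Perm ℕ) (x : {x : Fin n → ℕ // Function.Injective x}),
      (f ⟨fun i => σ (x.1 i), σ.injective.comp x.2⟩).1 = fun i => σ ((f x).1 i)) :
    (∃! j : Fin m → Fin n, Function.Injective j ∧
      ∀ x : {x : Fin n → ℕ // Function.Injective x}, (f x).1 = x.1 ∘ j) ∧ m ≤ n := by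
  have h := existsUnique_injective_eq_comp_of_equivariant hf
  refine ⟨h, ?_⟩
  obtain ⟨j, ⟨hj, -⟩, -⟩ := h
  exact Fin.le_of_injective j hj
end

section
/- Let P be the set of pairs (p, q) ∈ ℝ^{(2)} × ℝ^{(2)} with p lexicographically smaller than q, where for p = (a, b) and q = (c, d) one puts p <lex q iff a < c, or a = c and b < d. Then there is a bijection P ≅ (Fin 3 × ℝ^{(4)}) ⊕ (Fin 3 × ℝ^{(3)}) which is equivariant for the coordinatewise action of the group of order-preserving bijections of ℝ. Equivalently, P is the disjoint union of six 𝔾-orbits, three of which are 𝔾-equivariantly bijective to ℝ^{(4)} and three to ℝ^{(3)}. -/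
/-- `ℝ^{(n)}`: strictly increasing `n`-tuples of reals. -/
def IncTupR (n : ℕ) : Type := {x : Fin n → ℝ // StrictMono x}

/-- The coordinatewise action of an order automorphism of `ℝ` on `ℝ^{(n)}`. -/
def IncTupR.act (n : ℕ) (g : ℝ ≃o ℝ) (x : IncTupR n) : IncTupR n :=
  ⟨fun i => g (x.1 i), g.strictMono.comp x.2⟩

/-- The lexicographic order on `ℝ^{(2)}`. -/
def lexLt (p q : IncTupR 2) : Prop :=
  p.1 0 < q.1 0 ∨ (p.1 0 = q.1 0 ∧ p.1 1 < q.1 1)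

/-- `(ℝ^{(2)})^{(2)}`: pairs of points of `ℝ^{(2)}` in strictly increasing lexicographic
order. -/
def LexPairs : Type := {pq : IncTupR 2 × IncTupR 2 // lexLt pq.1 pq.2}

/-- The coordinatewise action of an order automorphism of `ℝ` on `(ℝ^{(2)})^{(2)}`. -/
def LexPairs.act (g : ℝ ≃o ℝ) (pq : LexPairs) : LexPairs :=
  ⟨(IncTupR.act 2 g pq.1.1, IncTupR.act 2 g pq.1.2), by
    rcases pq.2 with h | ⟨h1, h2⟩
    · exact Or.inl (g.strictMono h)
    · exact Or.inr ⟨congrArg g h1, g.strictMono h2⟩⟩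


/-! The coordinates `p₀ < p₁`, `q₀ < q₁` of a pair `(p, q)` are determined by their order pattern
together with the increasing tuple of their distinct values, and an order automorphism of `ℝ`
keeps the pattern and acts coordinatewise on that tuple. Lexicographic order `p < q` leaves
exactly six patterns: three with four distinct values and three with three distinct values
(`p₀ = q₀`, `p₁ = q₀` or `p₁ = q₁`). Every 4-tuple has the order pattern of a map
`Fin 4 → Fin 4`, so this classification is a finite check. -/

open Function

section OrderPattern

variable {ι α β : Type*} [LinearOrder α] [LinearOrder β]

def orderPattern (x : ι → α) : ι → ι → Ordering := fun i j => cmp (x i) (x j)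

theorem StrictMono.orderPattern_comp {t : α → β} (ht : StrictMono t) (x : ι → α) :
    orderPattern (t ∘ x) = orderPattern x := by
  funext i j
  exact ht.cmp_map_eq (x i) (x j)

theorem exists_fin_orderPattern_eq {n : ℕ} (x : Fin n → α) :
    ∃ σ : Fin n → Fin n, orderPattern σ = orderPattern x := by
  set S := Finset.univ.image x
  have hS : S.card ≤ n := Finset.card_image_le.trans (Finset.card_fin n).le
  let y : Fin n → S := fun i => ⟨x i, Finset.mem_image_of_mem x (Finset.mem_univ i)⟩
  have hf : StrictMono (Fin.castLE hS ∘ (S.orderIsoOfFin rfl).symm) :=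
    (Fin.strictMono_castLE hS).comp (S.orderIsoOfFin rfl).symm.strictMono
  refine ⟨(Fin.castLE hS ∘ (S.orderIsoOfFin rfl).symm) ∘ y, ?_⟩
  rw [hf.orderPattern_comp, ← Subtype.strictMono_coe _ |>.orderPattern_comp]
  rfl

theorem exists_strictMono_comp_eq_of_orderPattern_eq {π : ι → β} (hπ : Surjective π)
    {x : ι → α} (h : orderPattern x = orderPattern π) :
    ∃ t : β → α, StrictMono t ∧ t ∘ π = x := by
  have hcmp i j : cmp (x i) (x j) = cmp (π i) (π j) := congrFun (congrFun h i) j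
  refine ⟨x ∘ surjInv hπ, fun b b' hb => ?_, funext fun i => ?_⟩
  · rw [← cmp_eq_lt_iff, comp_apply, comp_apply, hcmp, surjInv_eq hπ, surjInv_eq hπ,
      cmp_eq_lt_iff]
    exact hb
  · rw [← cmp_eq_eq_iff, comp_apply, comp_apply, hcmp, surjInv_eq hπ, cmp_self_eq_eq]

end OrderPattern

section LexPattern

variable {α β : Type*} [LinearOrder α] [LinearOrder β]

def IsLexPattern (x : Fin 4 → α) : Prop :=
  x 0 < x 1 ∧ x 2 < x 3 ∧ (x 0 < x 2 ∨ x 0 = x 2 ∧ x 1 < x 3)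

instance : DecidablePred (IsLexPattern (α := α)) :=
  fun _ => by unfold IsLexPattern; infer_instance

theorem IsLexPattern.of_orderPattern_eq {x : Fin 4 → α} {y : Fin 4 → β}
    (h : orderPattern x = orderPattern y) (hx : IsLexPattern x) : IsLexPattern y := by
  have hcmp i j : cmp (x i) (x j) = cmp (y i) (y j) := congrFun (congrFun h i) j
  simpa only [IsLexPattern, ← cmp_eq_lt_iff, ← cmp_eq_eq_iff, hcmp] using hx

end LexPattern

-- Ranks of `p₀, p₁, q₀, q₁` among their distinct values, in the six lexicographic patterns
-- `p₁ < q₀`, `q₀ < p₁ < q₁`, `q₁ < p₁` and `p₀ = q₀`, `p₁ = q₀`, `p₁ = q₁`.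
def lexPattern4 : Fin 3 → Fin 4 → Fin 4 := ![![0, 1, 2, 3], ![0, 2, 1, 3], ![0, 3, 1, 2]]

def lexPattern3 : Fin 3 → Fin 4 → Fin 3 := ![![0, 1, 0, 2], ![0, 1, 1, 2], ![0, 2, 1, 2]]

theorem isLexPattern_lexPattern4 : ∀ i, IsLexPattern (lexPattern4 i) := by decide

theorem isLexPattern_lexPattern3 : ∀ i, IsLexPattern (lexPattern3 i) := by decide

theorem lexPattern4_surjective : ∀ i, Surjective (lexPattern4 i) := by decide

theorem lexPattern3_surjective : ∀ i, Surjective (lexPattern3 i) := by decide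

theorem orderPattern_lexPattern4_injective : Injective (orderPattern ∘ lexPattern4) := by
  decide

theorem orderPattern_lexPattern3_injective : Injective (orderPattern ∘ lexPattern3) := by
  decide

theorem orderPattern_lexPattern4_ne_lexPattern3 :
    ∀ i j, orderPattern (lexPattern4 i) ≠ orderPattern (lexPattern3 j) := by
  decide

theorem exists_orderPattern_eq_lexPattern :
    ∀ σ : Fin 4 → Fin 4, IsLexPattern σ →
      (∃ i, orderPattern σ = orderPattern (lexPattern4 i)) ∨
        ∃ i, orderPattern σ = orderPattern (lexPattern3 i) := by
  decide +kernel

namespace LexPairs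

def toTuple (pq : LexPairs) : Fin 4 → ℝ := ![pq.1.1.1 0, pq.1.1.1 1, pq.1.2.1 0, pq.1.2.1 1]

theorem isLexPattern_toTuple (pq : LexPairs) : IsLexPattern pq.toTuple :=
  ⟨pq.1.1.2 Fin.zero_lt_one, pq.1.2.2 Fin.zero_lt_one, pq.2⟩

theorem toTuple_injective : Injective toTuple := by
  rintro ⟨⟨p, q⟩, _⟩ ⟨⟨p', q'⟩, _⟩ h
  have hx i : toTuple _ i = toTuple _ i := congrFun h i
  have hp : p = p' := Subtype.ext (funext fun i => by fin_cases i; exacts [hx 0, hx 1])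
  have hq : q = q' := Subtype.ext (funext fun i => by fin_cases i; exacts [hx 2, hx 3])
  subst hp hq
  rfl

theorem toTuple_act (g : ℝ ≃o ℝ) (pq : LexPairs) : (act g pq).toTuple = g ∘ pq.toTuple := by
  funext i
  fin_cases i <;> rfl

def ofTuple (x : Fin 4 → ℝ) (hx : IsLexPattern x) : LexPairs :=
  ⟨(⟨![x 0, x 1], by simpa using hx.1⟩, ⟨![x 2, x 3], by simpa using hx.2.1⟩), hx.2.2⟩

theorem toTuple_ofTuple (x : Fin 4 → ℝ) (hx : IsLexPattern x) : (ofTuple x hx).toTuple = x := by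
  funext i
  fin_cases i <;> rfl

def ofPattern {k : ℕ} (π : Fin 4 → Fin k) (hπ : IsLexPattern π) (t : IncTupR k) : LexPairs :=
  ofTuple (t.1 ∘ π) (hπ.of_orderPattern_eq (t.2.orderPattern_comp π).symm)

variable {k l : ℕ} {π : Fin 4 → Fin k} (hπ : IsLexPattern π)

theorem toTuple_ofPattern (t : IncTupR k) : (ofPattern π hπ t).toTuple = t.1 ∘ π :=
  toTuple_ofTuple _ _

theorem ofPattern_act (g : ℝ ≃o ℝ) (t : IncTupR k) :
    ofPattern π hπ (IncTupR.act k g t) = act g (ofPattern π hπ t) :=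
  toTuple_injective (by rw [toTuple_act, toTuple_ofPattern, toTuple_ofPattern]; rfl)

theorem orderPattern_eq_of_ofPattern_eq {hπ : IsLexPattern π} {π' : Fin 4 → Fin l}
    {hπ' : IsLexPattern π'} {t : IncTupR k} {t' : IncTupR l}
    (h : ofPattern π hπ t = ofPattern π' hπ' t') :
    orderPattern π = orderPattern π' := by
  have h' := congrArg toTuple h
  rw [toTuple_ofPattern, toTuple_ofPattern] at h'
  rw [← t.2.orderPattern_comp, h', t'.2.orderPattern_comp]

theorem ofPattern_injective (hsurj : Surjective π) : Injective (ofPattern π hπ) := by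
  intro t t' h
  have h' := congrArg toTuple h
  rw [toTuple_ofPattern, toTuple_ofPattern] at h'
  exact Subtype.ext (hsurj.injective_comp_right h')

theorem exists_ofPattern_eq (hsurj : Surjective π) {pq : LexPairs}
    (h : orderPattern pq.toTuple = orderPattern π) : ∃ t, ofPattern π hπ t = pq := by
  obtain ⟨t, ht, htπ⟩ := exists_strictMono_comp_eq_of_orderPattern_eq hsurj h
  exact ⟨⟨t, ht⟩, toTuple_injective ((toTuple_ofPattern hπ _).trans htπ)⟩

def ofSum : (Fin 3 × IncTupR 4) ⊕ (Fin 3 × IncTupR 3) → LexPairs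
  | .inl (i, t) => ofPattern (lexPattern4 i) (isLexPattern_lexPattern4 i) t
  | .inr (i, t) => ofPattern (lexPattern3 i) (isLexPattern_lexPattern3 i) t

theorem ofSum_injective : Injective ofSum := by
  rintro (⟨i, t⟩ | ⟨i, t⟩) (⟨j, t'⟩ | ⟨j, t'⟩) h <;>
    simp only [ofSum] at h <;> have hij := orderPattern_eq_of_ofPattern_eq h
  · obtain rfl := orderPattern_lexPattern4_injective hij
    rw [ofPattern_injective _ (lexPattern4_surjective i) h]
  · exact absurd hij (orderPattern_lexPattern4_ne_lexPattern3 i j)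
  · exact absurd hij.symm (orderPattern_lexPattern4_ne_lexPattern3 j i)
  · obtain rfl := orderPattern_lexPattern3_injective hij
    rw [ofPattern_injective _ (lexPattern3_surjective i) h]

theorem ofSum_surjective : Surjective ofSum := by
  intro pq
  obtain ⟨σ, hσ⟩ := exists_fin_orderPattern_eq pq.toTuple
  rcases exists_orderPattern_eq_lexPattern σ (pq.isLexPattern_toTuple.of_orderPattern_eq hσ.symm)
    with ⟨i, hi⟩ | ⟨i, hi⟩
  · obtain ⟨t, ht⟩ := exists_ofPattern_eq (isLexPattern_lexPattern4 i)
      (lexPattern4_surjective i) (hσ.symm.trans hi)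
    exact ⟨.inl (i, t), ht⟩
  · obtain ⟨t, ht⟩ := exists_ofPattern_eq (isLexPattern_lexPattern3 i)
      (lexPattern3_surjective i) (hσ.symm.trans hi)
    exact ⟨.inr (i, t), ht⟩

theorem ofSum_act (g : ℝ ≃o ℝ) (s : (Fin 3 × IncTupR 4) ⊕ (Fin 3 × IncTupR 3)) :
    ofSum (Sum.map (Prod.map id (IncTupR.act 4 g)) (Prod.map id (IncTupR.act 3 g)) s) =
      act g (ofSum s) := by
  rcases s with ⟨i, t⟩ | ⟨i, t⟩
  exacts [ofPattern_act (isLexPattern_lexPattern4 i) g t,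
    ofPattern_act (isLexPattern_lexPattern3 i) g t]

end LexPairs

/-- The `𝔾`-set `(ℝ^{(2)})^{(2)}` (pairs of elements of `ℝ^{(2)}` that are strictly
increasing for the lexicographic order) is equivariantly in bijection with the disjoint
union of three copies of `ℝ^{(4)}` and three copies of `ℝ^{(3)}`. -/
theorem stmt_8 :
    ∃ e : LexPairs ≃ (Fin 3 × IncTupR 4) ⊕ (Fin 3 × IncTupR 3),
      ∀ (g : ℝ ≃o ℝ) (pq : LexPairs),
        e (LexPairs.act g pq) =
          Sum.map (Prod.map id (IncTupR.act 4 g)) (Prod.map id (IncTupR.act 3 g)) (e pq) := by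
  set e :=
    Equiv.ofBijective LexPairs.ofSum ⟨LexPairs.ofSum_injective, LexPairs.ofSum_surjective⟩
  refine ⟨e.symm, fun g pq => e.symm_apply_eq.2 ?_⟩
  calc LexPairs.act g pq = LexPairs.act g (e (e.symm pq)) := by rw [e.apply_symm_apply]
    _ = _ := (LexPairs.ofSum_act g _).symm
end

section
/- Let α be a linearly ordered type and n ∈ ℕ. Associating to a tuple x : Fin n → α the total preorder w_x on Fin n defined by (i ≤_{w_x} j ↔ x i ≤ x j), together with the unique strictly increasing tuple enumerating the distinct values of x, defines a bijection between the set of all functions Fin n → α and the dependent sum, over all total preorders w on Fin n (reflexive, transitive, total relations), of α^{(c(w))}, where c(w) is the number of equivalence classes of the equivalence relation (i ≈ j ↔ i ≤_w j ∧ j ≤_w i) and α^{(k)} denotes the set of strictly increasing k-tuples in α. -/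
/-- Total preorders on `Fin n`: reflexive, transitive, total relations. -/
def TotalPreorderOn (n : ℕ) : Type :=
  {w : Fin n → Fin n → Prop // Reflexive w ∧ Transitive w ∧ ∀ i j, w i j ∨ w j i}

/-- The number of equivalence classes of the equivalence relation `i ≈ j ↔ w i j ∧ w j i`
associated to a total preorder `w` on `Fin n`. -/
noncomputable def numClasses {n : ℕ} (w : TotalPreorderOn n) : ℕ :=
  Nat.card (Quot (fun i j => w.1 i j ∧ w.1 j i))

/-! A total preorder `w` on `Fin n` induces a linear order on its set of classes, which is
therefore order-isomorphic to `Fin (numClasses w)`. A pair `(w, y)` with `y` strictly increasing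
thus yields the tuple `i ↦ y (class of i)`, whose preorder is `w` and whose range is that of `y`.
This map is injective because a strictly increasing tuple is determined by its range, and
surjective because every tuple `x` factors through the classes of its own preorder by an order
embedding. Its inverse is the required bijection. -/

namespace TotalPreorderOn

variable {n : ℕ}

def Classes (w : TotalPreorderOn n) : Type := Quot (fun i j => w.1 i j ∧ w.1 j i)

def cls (w : TotalPreorderOn n) (i : Fin n) : w.Classes := Quot.mk _ i

theorem cls_surjective (w : TotalPreorderOn n) : Function.Surjective w.cls :=
  Quot.mk_surjective

noncomputable instance (w : TotalPreorderOn n) : LinearOrder w.Classes where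
  le := Quot.lift₂ w.1
    (fun _ _ _ h => propext ⟨fun hij => w.2.2.1 hij h.1, fun hij => w.2.2.1 hij h.2⟩)
    (fun _ _ _ h => propext ⟨fun hij => w.2.2.1 h.2 hij, fun hij => w.2.2.1 h.1 hij⟩)
  le_refl a := by
    induction a using Quot.ind
    exact w.2.1 _
  le_trans a b c := by
    induction a using Quot.ind; induction b using Quot.ind; induction c using Quot.ind
    exact fun hab hbc => w.2.2.1 hab hbc
  le_antisymm a b := by
    induction a using Quot.ind; induction b using Quot.ind
    exact fun hab hba => Quot.sound ⟨hab, hba⟩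
  le_total a b := by
    induction a using Quot.ind; induction b using Quot.ind
    exact w.2.2.2 _ _
  toDecidableLE := Classical.decRel _

theorem cls_le_cls_iff (w : TotalPreorderOn n) {i j : Fin n} : w.cls i ≤ w.cls j ↔ w.1 i j :=
  Iff.rfl

instance (w : TotalPreorderOn n) : Finite w.Classes :=
  Finite.of_surjective _ w.cls_surjective

noncomputable def orderIsoClasses (w : TotalPreorderOn n) : Fin (numClasses w) ≃o w.Classes :=
  letI := Fintype.ofFinite w.Classes
  monoEquivOfFin _ Nat.card_eq_fintype_card.symm

noncomputable def realize {β : Type*} (w : TotalPreorderOn n) (y : Fin (numClasses w) → β) :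
    Fin n → β :=
  fun i => y (w.orderIsoClasses.symm (w.cls i))

theorem range_realize {β : Type*} (w : TotalPreorderOn n) (y : Fin (numClasses w) → β) :
    Set.range (w.realize y) = Set.range y :=
  (w.orderIsoClasses.symm.surjective.comp w.cls_surjective).range_comp y

theorem realize_comp_orderIsoClasses {β : Type*} (w : TotalPreorderOn n) (f : w.Classes → β) :
    w.realize (f ∘ w.orderIsoClasses) = f ∘ w.cls :=
  funext fun _ => congrArg f (w.orderIsoClasses.apply_symm_apply _)

variable {α : Type*} [LinearOrder α]

theorem realize_le_realize_iff {w : TotalPreorderOn n} {y : Fin (numClasses w) → α}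
    (hy : StrictMono y) {i j : Fin n} : w.realize y i ≤ w.realize y j ↔ w.1 i j := by
  rw [realize, realize, hy.le_iff_le, OrderIso.le_iff_le, cls_le_cls_iff]

def ofTuple (x : Fin n → α) : TotalPreorderOn n :=
  ⟨fun i j => x i ≤ x j, fun _ => le_rfl, fun _ _ _ => le_trans, fun i j => le_total (x i) (x j)⟩

noncomputable def liftOfTuple (x : Fin n → α) : (ofTuple x).Classes ↪o α :=
  OrderEmbedding.ofMapLEIff (Quot.lift x fun _ _ h => le_antisymm h.1 h.2) fun a b => by
    induction a using Quot.ind; induction b using Quot.ind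
    rfl

theorem realize_injective :
    Function.Injective fun p : Σ w : TotalPreorderOn n, {y : Fin (numClasses w) → α // StrictMono y} =>
      p.1.realize p.2.1 := by
  rintro ⟨w, y, hy⟩ ⟨w', y', hy'⟩ h
  obtain rfl : w = w' := Subtype.ext <| funext₂ fun i j => propext <| by
    rw [← realize_le_realize_iff hy, ← realize_le_realize_iff hy']
    exact iff_of_eq (congrArg₂ (· ≤ ·) (congrFun h i) (congrFun h j))
  have hrange : Set.range y = Set.range y' := by
    rw [← range_realize, ← range_realize]
    exact congrArg Set.range h
  obtain rfl : y = y' := (hy.range_inj hy').1 hrange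
  rfl

theorem realize_surjective :
    Function.Surjective fun p : Σ w : TotalPreorderOn n, {y : Fin (numClasses w) → α // StrictMono y} =>
      p.1.realize p.2.1 := fun x =>
  ⟨⟨ofTuple x, liftOfTuple x ∘ (ofTuple x).orderIsoClasses,
    (liftOfTuple x).strictMono.comp (ofTuple x).orderIsoClasses.strictMono⟩,
    realize_comp_orderIsoClasses _ _⟩

end TotalPreorderOn

/-- Sending a tuple `x : Fin n → α` to the total preorder `i ≤ j ↔ x i ≤ x j` on `Fin n`
together with the strictly increasing enumeration of its distinct values is a bijection
from `Fin n → α` to the dependent sum over all total preorders `w` on `Fin n` of the sets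
`α^{(c(w))}` of strictly increasing tuples of length the number of classes of `w`. -/
theorem stmt_10 (α : Type*) [LinearOrder α] (n : ℕ) :
    ∃ e : (Fin n → α) ≃
        Σ w : TotalPreorderOn n, {y : Fin (numClasses w) → α // StrictMono y},
      ∀ x : Fin n → α,
        (∀ i j, (e x).1.1 i j ↔ x i ≤ x j) ∧
        Set.range ((e x).2.1) = Set.range x := by
  let e := Equiv.ofBijective _
    ⟨TotalPreorderOn.realize_injective (α := α) (n := n), TotalPreorderOn.realize_surjective⟩
  refine ⟨e.symm, fun x => ?_⟩
  have hx : (e.symm x).1.realize (e.symm x).2.1 = x := e.apply_symm_apply x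
  generalize e.symm x = p at hx ⊢
  obtain ⟨w, y, hy⟩ := p
  subst hx
  exact ⟨fun i j => (TotalPreorderOn.realize_le_realize_iff hy).symm,
    (w.range_realize y).symm⟩
end

section
/- Let S be a lextensive category, let (X, R) be an ordered object of S, and let a : 1 → X be a morphism from the terminal object. Pulling back the isomorphism R ⨿ X ⨿ R^op ≅ X × X along the morphism (id_X, a ∘ !_X) : X → X × X yields a coproduct decomposition X ≅ Y ⨿ E ⨿ Z, and the middle piece E (the pullback of the diagonal Δ_X along (id_X, a ∘ !_X)) is a terminal object of S; thus every point a : 1 → X induces a decomposition X ≅ Y ⨿ 1 ⨿ Z. -/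
/-!
Coproduct decompositions in an extensive category are stable under pullback, so pulling back
`R ⨿ X ⨿ R^op ≅ X ⨯ X` along `(id_X, a ∘ !_X)` decomposes `X` into three pieces. A generalized
element `x : T ⟶ X` lies in the middle piece iff `(x, x) = (x, a ∘ !_T)`, i.e. iff `x = a ∘ !_T`;
so that piece has exactly one generalized element at each stage, i.e. it is terminal.
-/

open CategoryTheory CategoryTheory.Limits

universe v u

variable {S : Type u} [Category.{v} S]

/-- A total order on an object `X` of a lextensive category, given by a monomorphism
`r : R ⟶ X ⨯ X`: the canonical map `R ⨿ X ⨿ R^op → X ⨯ X` (inclusion, diagonal, opposite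
inclusion) is an isomorphism, and `R₁₂ ∩ R₂₃ ≤ R₁₃` as subobjects of `X ⨯ X ⨯ X`. -/
structure IsTotalOrderOn [HasFiniteLimits S] [HasFiniteCoproducts S]
    {X R : S} (r : R ⟶ X ⨯ X) [Mono r] : Prop where
  total : IsIso (coprod.desc r (coprod.desc (diag X) (r ≫ (prod.braiding X X).hom)))
  trans :
    (Subobject.pullback
        (prod.lift prod.fst (prod.snd ≫ prod.fst) : X ⨯ X ⨯ X ⟶ X ⨯ X)).obj
      (Subobject.mk r) ⊓
    (Subobject.pullback (prod.snd : X ⨯ X ⨯ X ⟶ X ⨯ X)).obj (Subobject.mk r) ≤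
    (Subobject.pullback
        (prod.lift prod.fst (prod.snd ≫ prod.snd) : X ⨯ X ⨯ X ⟶ X ⨯ X)).obj
      (Subobject.mk r)

section PullbackDiag

variable [HasTerminal S] [HasBinaryProducts S] [HasPullbacks S]

lemma pullback_diag_lift_id_const_comp_eq {X T : S} (a : ⊤_ S ⟶ X)
    (m : T ⟶ pullback (diag X) (prod.lift (𝟙 X) (terminal.from X ≫ a))) :
    m ≫ pullback.fst _ _ = terminal.from T ≫ a ∧ m ≫ pullback.snd _ _ = terminal.from T ≫ a := by
  have h := m ≫= pullback.condition
  rw [← Category.assoc, ← Category.assoc, prod.comp_diag, prod.comp_lift, Category.comp_id,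
    ← Category.assoc, terminal.comp_from] at h
  have hfst := h =≫ prod.fst
  have hsnd := h =≫ prod.snd
  simp only [prod.lift_fst, prod.lift_snd] at hfst hsnd
  exact ⟨hsnd, hfst.symm.trans hsnd⟩

noncomputable def isTerminalPullbackDiagLiftIdConst {X : S} (a : ⊤_ S ⟶ X) :
    IsTerminal (pullback (diag X) (prod.lift (𝟙 X) (terminal.from X ≫ a))) :=
  IsTerminal.ofUniqueHom
    (fun T => pullback.lift (terminal.from T ≫ a) (terminal.from T ≫ a) (by ext <;> simp))
    (fun _ m => by
      obtain ⟨hm₁, hm₂⟩ := pullback_diag_lift_id_const_comp_eq a m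
      obtain ⟨hl₁, hl₂⟩ := pullback_diag_lift_id_const_comp_eq a (pullback.lift _ _ _)
      exact pullback.hom_ext (hm₁.trans hl₁.symm) (hm₂.trans hl₂.symm))

end PullbackDiag

section Ternary

variable [HasFiniteCoproducts S]

noncomputable def coprodCoprodIsoSigma (W : Fin 3 → S) : W 0 ⨿ (W 1 ⨿ W 2) ≅ ∐ W where
  hom := coprod.desc (Sigma.ι W 0) (coprod.desc (Sigma.ι W 1) (Sigma.ι W 2))
  inv := Sigma.desc fun
    | 0 => coprod.inl
    | 1 => coprod.inl ≫ coprod.inr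
    | 2 => coprod.inr ≫ coprod.inr
  hom_inv_id := by
    ext
    · rw [coprod.inl_desc_assoc, Sigma.ι_desc, Category.comp_id]
    · rw [coprod.inr_desc_assoc, coprod.inl_desc_assoc, Sigma.ι_desc, Category.comp_id]
    · rw [coprod.inr_desc_assoc, coprod.inr_desc_assoc, Sigma.ι_desc, Category.comp_id]
  inv_hom_id := by
    ext i
    fin_cases i
    · rw [Sigma.ι_desc_assoc, Category.comp_id]; exact coprod.inl_desc _ _
    · rw [Sigma.ι_desc_assoc, Category.comp_id, Category.assoc, coprod.inr_desc, coprod.inl_desc]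
      rfl
    · rw [Sigma.ι_desc_assoc, Category.comp_id, Category.assoc, coprod.inr_desc, coprod.inr_desc]
      rfl

lemma isIso_coprodDesc_coprodDesc_iff {W : Fin 3 → S} {T : S} (l : ∀ i, W i ⟶ T) :
    IsIso (coprod.desc (l 0) (coprod.desc (l 1) (l 2))) ↔ IsIso (Sigma.desc l) := by
  have : coprod.desc (l 0) (coprod.desc (l 1) (l 2)) =
      (coprodCoprodIsoSigma W).hom ≫ Sigma.desc l := by
    simp only [coprodCoprodIsoSigma, coprod.desc_comp, Sigma.ι_desc]
  rw [this, isIso_comp_left_iff]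

end Ternary

section FinitaryPreExtensive

variable [FinitaryPreExtensive S] [HasPullbacks S]

lemma FinitaryPreExtensive.isIso_sigmaDesc_pullbackSnd {α : Type} [Finite α] {Y X : S}
    {Z : α → S} (π : ∀ i, Z i ⟶ Y) (f : X ⟶ Y) [IsIso (Sigma.desc π)] :
    IsIso (Sigma.desc fun i => pullback.snd (π i) f) := by
  have := FinitaryPreExtensive.isIso_sigmaDesc_fst π f inferInstance
  have e : (Sigma.mapIso fun i => pullbackSymmetry (π i) f).hom ≫
      Sigma.desc (fun i => pullback.fst f (π i)) = Sigma.desc fun i => pullback.snd (π i) f := by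
    ext i; simp
  rw [← e]
  infer_instance

lemma FinitaryPreExtensive.isIso_coprodDesc_coprodDesc_pullbackSnd {A₀ A₁ A₂ Y X : S}
    (u₀ : A₀ ⟶ Y) (u₁ : A₁ ⟶ Y) (u₂ : A₂ ⟶ Y) (f : X ⟶ Y)
    (h : IsIso (coprod.desc u₀ (coprod.desc u₁ u₂))) :
    IsIso (coprod.desc (pullback.snd u₀ f)
      (coprod.desc (pullback.snd u₁ f) (pullback.snd u₂ f))) := by
  let u : ∀ i, ![A₀, A₁, A₂] i ⟶ Y := Fin.cases u₀ (Fin.cases u₁ (Fin.cases u₂ finZeroElim))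
  have : IsIso (Sigma.desc u) := (isIso_coprodDesc_coprodDesc_iff u).mp h
  exact (isIso_coprodDesc_coprodDesc_iff fun i => pullback.snd (u i) f).mpr
    (isIso_sigmaDesc_pullbackSnd u f)

end FinitaryPreExtensive

/-- A point `a : 1 → X` of an ordered object `(X, R)` of a lextensive category induces,
by pulling back `R ⨿ X ⨿ R^op ≅ X ⨯ X` along `(id_X, a ∘ !_X) : X → X ⨯ X`, a
decomposition `X ≅ Y ⨿ E ⨿ Z` in which the middle piece `E` (the pullback of the diagonal)
is terminal; thus `X ≅ Y ⨿ 1 ⨿ Z`. -/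
theorem stmt_14 [HasFiniteLimits S] [FinitaryExtensive S]
    {X R : S} (r : R ⟶ X ⨯ X) [Mono r] (hR : IsTotalOrderOn r)
    (a : ⊤_ S ⟶ X) :
    Nonempty (IsTerminal (pullback (diag X) (prod.lift (𝟙 X) (terminal.from X ≫ a)))) ∧
    IsIso (coprod.desc
      (pullback.snd r (prod.lift (𝟙 X) (terminal.from X ≫ a)))
      (coprod.desc
        (pullback.snd (diag X) (prod.lift (𝟙 X) (terminal.from X ≫ a)))
        (pullback.snd (r ≫ (prod.braiding X X).hom)
          (prod.lift (𝟙 X) (terminal.from X ≫ a))))) :=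
  ⟨⟨isTerminalPullbackDiagLiftIdConst a⟩,
    FinitaryPreExtensive.isIso_coprodDesc_coprodDesc_pullbackSnd _ _ _ _ hR.total⟩
end

section
/- Let C be a monoidal category and A a monoid object of C with multiplication m : A ⊗ A → A and unit η : 1 → A. Suppose s : A → A ⊗ A is a morphism satisfying m ∘ s = id_A and (m ⊗ id_A) ∘ (id_A ⊗ s) = s ∘ m = (id_A ⊗ m) ∘ (s ⊗ id_A) (up to associators), i.e., s is an A-bimodule splitting of the multiplication. Then for every left A-module M (object of the category Mod_A of A-modules in C, with action act_M : A ⊗ M → M), the action morphism act_M, regarded as a morphism in Mod_A from the free module A ⊗ M to M, is a split epimorphism in Mod_A: the composite M → A ⊗ M → (A ⊗ A) ⊗ M → A ⊗ M given by (left unitor)⁻¹ followed by η ⊗ id_M, then s ⊗ id_M, then (after reassociating) id_A ⊗ act_M, is a morphism of A-modules and a section of act_M. -/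
/-!
Write `τ = s ▷ X ≫ α ≫ A ◁ γ`, so that the section is `σ = λ⁻¹ ≫ η ▷ X ≫ τ`.
After sliding `γ` through `σ` and using associativity of the action, left `A`-linearity of `s`
and the unit law turn `γ ≫ σ` into `τ`; symmetrically, right `A`-linearity of `s` turns
`A ◁ σ` followed by the free action into `τ`, so `σ` is `A`-linear. Associativity of the action
and `s ≫ μ = 𝟙` collapse `σ ≫ γ` to `λ⁻¹ ≫ η ▷ X ≫ γ = 𝟙`.
-/

open CategoryTheory MonoidalCategory
open scoped CategoryTheory.MonObj

namespace CategoryTheory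

variable {C : Type*} [Category C] [MonoidalCategory C] {A : C} [MonObj A]

def splittingSection (s : A ⟶ A ⊗ A) (X : C) [ModObj A X] : X ⟶ A ⊗ X :=
  (λ_ X).inv ≫ η ▷ X ≫ s ▷ X ≫ (α_ A A X).hom ≫ A ◁ γ[A, X]

variable (s : A ⟶ A ⊗ A) (X : C) [ModObj A X]

theorem splittingSection_smul (hs : s ≫ μ = 𝟙 A) : splittingSection s X ≫ γ[A, X] = 𝟙 X :=
  calc splittingSection s X ≫ γ[A, X] = (λ_ X).inv ≫ η ▷ X ≫ (s ≫ μ) ▷ X ≫ γ[A, X] := by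
        simp [splittingSection]
    _ = 𝟙 X := by simp [hs]

theorem smul_splittingSection (hs : s ▷ A ≫ (α_ A A A).hom ≫ A ◁ μ = μ ≫ s) :
    γ[A, X] ≫ splittingSection s X = s ▷ X ≫ (α_ A A X).hom ≫ A ◁ γ[A, X] :=
  calc γ[A, X] ≫ splittingSection s X
      = (λ_ _).inv ≫ η ▷ (A ⊗ X) ≫ s ▷ (A ⊗ X) ≫ (α_ A A _).hom ≫
          A ◁ A ◁ γ[A, X] ≫ A ◁ γ[A, X] := by
        simp only [splittingSection, leftUnitor_inv_naturality_assoc, whisker_exchange_assoc,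
          associator_naturality_right_assoc, selfLeftAction_actionObj]
    _ = (λ_ _).inv ≫ η ▷ (A ⊗ X) ≫ s ▷ (A ⊗ X) ≫ (α_ A A _).hom ≫
          A ◁ ((α_ A A X).inv ≫ μ ▷ X ≫ γ[A, X]) := by
        rw [← whiskerLeft_comp, ModObj.mul_smul_self_flip]
    _ = ((λ_ A).inv ≫ η ▷ A ≫ s ▷ A ≫ (α_ A A A).hom ≫ A ◁ μ) ▷ X ≫
          (α_ A A X).hom ≫ A ◁ γ[A, X] := by
        monoidal
    _ = s ▷ X ≫ (α_ A A X).hom ≫ A ◁ γ[A, X] := by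
        simp [hs]

theorem whiskerLeft_splittingSection_mul (hs : A ◁ s ≫ (α_ A A A).inv ≫ μ ▷ A = μ ≫ s) :
    A ◁ splittingSection s X ≫ (α_ A A X).inv ≫ μ ▷ X = s ▷ X ≫ (α_ A A X).hom ≫ A ◁ γ[A, X] :=
  calc A ◁ splittingSection s X ≫ (α_ A A X).inv ≫ μ ▷ X
      = A ◁ ((λ_ X).inv ≫ η ▷ X ≫ s ▷ X ≫ (α_ A A X).hom) ≫ (α_ A A _).inv ≫
          μ ▷ (A ⊗ X) ≫ A ◁ γ[A, X] := by
        simp only [splittingSection, whiskerLeft_comp, Category.assoc,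
          associator_inv_naturality_right_assoc, whisker_exchange]
    _ = ((ρ_ A).inv ≫ A ◁ η ≫ A ◁ s ≫ (α_ A A A).inv ≫ μ ▷ A) ▷ X ≫
          (α_ A A X).hom ≫ A ◁ γ[A, X] := by
        monoidal
    _ = s ▷ X ≫ (α_ A A X).hom ≫ A ◁ γ[A, X] := by
        simp [hs]

end CategoryTheory

/-- Let `A` be a monoid object in a monoidal category `C` and `s : A ⟶ A ⊗ A` an
`A`-bimodule splitting of the multiplication (`m ∘ s = id` and
`(m ⊗ id) ∘ (id ⊗ s) = s ∘ m = (id ⊗ m) ∘ (s ⊗ id)` up to associators).  Then for every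
left `A`-module `M` the action map, viewed as a morphism of `A`-modules from the free
module `A ⊗ M` to `M`, is a split epimorphism in `Mod_ A`: the composite
`σ = (λ_M)⁻¹ ≫ (η ▷ M) ≫ (s ▷ M) ≫ (α_) ≫ (A ◁ act)` is a section of the action and a
morphism of `A`-modules `M ⟶ A ⊗ M` (where `A ⊗ M` carries the free module action
`(α_)⁻¹ ≫ (mul ▷ M)`). -/
theorem stmt_16 {C : Type*} [Category C] [MonoidalCategory C]
    (A : Mon C) (s : A.X ⟶ A.X ⊗ A.X)
    (hs₀ : s ≫ (MonObj.mul (X := A.X)) = 𝟙 A.X)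
    (hs₁ : (A.X ◁ s) ≫ (α_ A.X A.X A.X).inv ≫ ((MonObj.mul (X := A.X)) ▷ A.X) = (MonObj.mul (X := A.X)) ≫ s)
    (hs₂ : (s ▷ A.X) ≫ (α_ A.X A.X A.X).hom ≫ (A.X ◁ (MonObj.mul (X := A.X))) = (MonObj.mul (X := A.X)) ≫ s)
    (M : Mod C A.X) :
    ((λ_ M.X).inv ≫ ((MonObj.one (X := A.X)) ▷ M.X) ≫ (s ▷ M.X) ≫ (α_ A.X A.X M.X).hom ≫
        (A.X ◁ (ModObj.smul (M := A.X) (X := M.X)))) ≫ (ModObj.smul (M := A.X) (X := M.X)) = 𝟙 M.X ∧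
    (ModObj.smul (M := A.X) (X := M.X)) ≫ ((λ_ M.X).inv ≫ ((MonObj.one (X := A.X)) ▷ M.X) ≫ (s ▷ M.X) ≫ (α_ A.X A.X M.X).hom ≫
        (A.X ◁ (ModObj.smul (M := A.X) (X := M.X)))) =
      (A.X ◁ ((λ_ M.X).inv ≫ ((MonObj.one (X := A.X)) ▷ M.X) ≫ (s ▷ M.X) ≫ (α_ A.X A.X M.X).hom ≫
        (A.X ◁ (ModObj.smul (M := A.X) (X := M.X))))) ≫ (α_ A.X A.X M.X).inv ≫ ((MonObj.mul (X := A.X)) ▷ M.X) :=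
  ⟨splittingSection_smul s M.X hs₀,
    (smul_splittingSection s M.X hs₂).trans (whiskerLeft_splittingSection_mul s M.X hs₁).symm⟩
end
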